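/- Let u be the 4×4 utility matrix with rows u₁ = u₂ = (11, 9, 14, 0) and u₃ = u₄ = (0, 0, 10, 0) (items labeled A, B, C, D). Let λ ∈ ℝ⁴ with λ_i ≥ 0, set u'_{ij} := λ_i·u_{ij}, and let π be a permutation of {1,2,3,4} attaining OPT(u') and satisfying π({1,2}) = {A,B} and π({3,4}) = {C,D}. Then the VCG payments satisfy p₁(u',π) + p₂(u',π) ≤ p₃(u',π) + p₄(u',π), with equality only if p₁(u',π) = p₂(u',π) = 0. (This is the key inequality showing the Hylland–Zeckhauser equilibrium allocating each of items A, B half-half to players 1, 2 and each of C, D half-half to players 3, 4 at prices (1.1, 0.9, 2, 0) cannot be supported by VCG prices on rescaled utilities.) -/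

import Mathlib

open Finset

/-- The optimal welfare of the assignment problem. -/
noncomputable def OPT (n : ℕ) (u : Fin n → Fin n → ℝ) : ℝ :=
  sSup {v | ∃ π : Equiv.Perm (Fin n), v = ∑ i, u i (π i)}

/-- The VCG payment of player `i` under an optimal assignment `π`. -/
noncomputable def payment (n : ℕ) (u : Fin n → Fin n → ℝ) (π : Equiv.Perm (Fin n))
    (i : Fin n) : ℝ :=
  sSup {v | ∃ σ : Fin n → Fin n,
      (∀ k l : Fin n, k ≠ i → l ≠ i → σ k = σ l → k = l) ∧
      v = ∑ k ∈ Finset.univ.erase i, u k (σ k)} -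
    ∑ k ∈ Finset.univ.erase i, u k (π k)

/-- The 4×4 example utility matrix: rows `(11, 9, 14, 0)` for players 1, 2
and `(0, 0, 10, 0)` for players 3, 4 (items `A = 0`, `B = 1`, `C = 2`, `D = 3`). -/
noncomputable def uEx : Fin 4 → Fin 4 → ℝ :=
  ![![11, 9, 14, 0], ![11, 9, 14, 0], ![0, 0, 10, 0], ![0, 0, 10, 0]]

/-!
Players 0 and 1 have the same utilities, and so do players 2 and 3. Hence relabelling the players
by `π` (and permuting `λ` with them) reduces the theorem to the case where the identity assignment
is optimal. Comparing it with the transpositions (2 3), (1 2) and (0 2) gives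
`λ₃ ≤ λ₂`, `λ₁ ≤ 2λ₂` and `3λ₀ ≤ 10λ₂`. Then without a top player the others can reach at most
`11λₒ + 10λ₂` (`o` the other top player, item C going to `o` or to a bottom player), so
`p₀ ≤ 2λ₁` and `p₁ ≤ 0`; without player 2, players 0 and 1 take A and C, so `p₂ ≥ 5λ₁`.
As payments are nonnegative, `p₀ + p₁ ≤ 2λ₁ ≤ 5λ₁ ≤ p₂ + p₃`, and equality forces `λ₁ = 0`.
-/

open Equiv

section Assignment

variable {n : ℕ} (u : Fin n → Fin n → ℝ)

theorem sum_le_OPT (ρ : Perm (Fin n)) : ∑ i, u i (ρ i) ≤ OPT n u :=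
  le_csSup ((Set.finite_range fun π : Perm (Fin n) => ∑ i, u i (π i)).bddAbove.mono
    (by rintro _ ⟨π, rfl⟩; exact ⟨π, rfl⟩)) ⟨ρ, rfl⟩

theorem OPT_comp (τ : Perm (Fin n)) : OPT n (fun k => u (τ k)) = OPT n u := by
  unfold OPT
  congr 1
  ext v
  constructor
  · rintro ⟨ρ, rfl⟩
    exact ⟨τ.symm.trans ρ, by simpa using Equiv.sum_comp τ fun j => u j (ρ (τ.symm j))⟩
  · rintro ⟨ρ, rfl⟩
    exact ⟨τ.trans ρ, (Equiv.sum_comp τ _).symm⟩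

theorem payment_comp (π τ : Perm (Fin n)) (i : Fin n) :
    payment n (fun k => u (τ k)) (τ.trans π) i = payment n u π (τ i) := by
  have hsum (σ : Fin n → Fin n) :
      ∑ k ∈ univ.erase i, u (τ k) (σ (τ k)) = ∑ k ∈ univ.erase (τ i), u k (σ k) :=
    Finset.sum_equiv τ (by simp) (by simp)
  unfold payment
  congr 1
  · congr 1
    ext v
    constructor
    · rintro ⟨σ, hσ, rfl⟩
      refine ⟨σ ∘ τ.symm, fun k l hk hl h => τ.symm.injective
        (hσ _ _ (by rwa [Ne, symm_apply_eq]) (by rwa [Ne, symm_apply_eq]) h), ?_⟩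
      rw [← hsum]
      simp only [Function.comp_apply, symm_apply_apply]
    · rintro ⟨σ, hσ, rfl⟩
      exact ⟨σ ∘ τ, fun k l hk hl h => τ.injective (hσ _ _ (by simpa using hk)
        (by simpa using hl) h), (hsum σ).symm⟩
  · simpa only [Equiv.trans_apply] using hsum π

theorem le_payment (π : Perm (Fin n)) (i : Fin n) (σ : Fin n → Fin n)
    (hσ : ∀ k l : Fin n, k ≠ i → l ≠ i → σ k = σ l → k = l) :
    ∑ k ∈ univ.erase i, u k (σ k) - ∑ k ∈ univ.erase i, u k (π k) ≤ payment n u π i := by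
  unfold payment
  gcongr
  refine le_csSup ?_ ⟨σ, hσ, rfl⟩
  exact (Set.finite_range fun σ : Fin n → Fin n => ∑ k ∈ univ.erase i, u k (σ k)).bddAbove.mono
    (by rintro _ ⟨σ, -, rfl⟩; exact ⟨σ, rfl⟩)

theorem payment_le (π : Perm (Fin n)) (i : Fin n) (M : ℝ)
    (h : ∀ σ : Fin n → Fin n, (∀ k l : Fin n, k ≠ i → l ≠ i → σ k = σ l → k = l) →
      ∑ k ∈ univ.erase i, u k (σ k) ≤ M) :
    payment n u π i ≤ M - ∑ k ∈ univ.erase i, u k (π k) := by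
  unfold payment
  gcongr
  exact csSup_le ⟨_, π, fun k l _ _ h => π.injective h, rfl⟩ fun _ ⟨σ, hσ, hv⟩ => hv ▸ h σ hσ

theorem payment_nonneg (π : Perm (Fin n)) (i : Fin n) : 0 ≤ payment n u π i := by
  simpa using le_payment u π i π fun k l _ _ h => π.injective h

end Assignment

theorem uEx_one : uEx 1 = uEx 0 := rfl

theorem uEx_three : uEx 3 = uEx 2 := rfl

theorem lam_bounds_of_identity_optimal (lam : Fin 4 → ℝ)
    (hW : ∀ ρ : Perm (Fin 4), ∑ i, lam i * uEx i (ρ i) ≤ ∑ i, lam i * uEx i i) :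
    lam 3 ≤ lam 2 ∧ lam 1 ≤ 2 * lam 2 ∧ 3 * lam 0 ≤ 10 * lam 2 := by
  have h23 := hW (swap 2 3)
  have h12 := hW (swap 1 2)
  have h02 := hW (swap 0 2)
  simp only [uEx, Fin.sum_univ_four, Matrix.cons_val, swap_apply_left, swap_apply_right,
    swap_apply_of_ne_of_ne, ne_eq, Fin.reduceEq, not_false_eq_true] at h23 h12 h02
  exact ⟨by linarith, by linarith, by linarith⟩

theorem welfare_without_top_le (lam : Fin 4 → ℝ) (hlam : ∀ i, 0 ≤ lam i) (h32 : lam 3 ≤ lam 2)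
    {i o : Fin 4} (hio : i = 0 ∧ o = 1 ∨ i = 1 ∧ o = 0) (ho : 3 * lam o ≤ 10 * lam 2)
    (σ : Fin 4 → Fin 4) (hσ : ∀ k l : Fin 4, k ≠ i → l ≠ i → σ k = σ l → k = l) :
    ∑ k ∈ univ.erase i, lam k * uEx k (σ k) ≤ 11 * lam o + 10 * lam 2 := by
  have hsum : ∑ k ∈ univ.erase i, lam k * uEx k (σ k) =
      lam o * uEx 0 (σ o) + lam 2 * uEx 2 (σ 2) + lam 3 * uEx 2 (σ 3) := by
    rcases hio with ⟨rfl, rfl⟩ | ⟨rfl, rfl⟩ <;>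
      simp only [sum_erase_eq_sub (mem_univ _), Fin.sum_univ_four, uEx_one, uEx_three] <;> ring
  obtain ⟨h1, h2, h3⟩ : σ o ≠ σ 2 ∧ σ o ≠ σ 3 ∧ σ 2 ≠ σ 3 := by
    rcases hio with ⟨rfl, rfl⟩ | ⟨rfl, rfl⟩ <;> refine ⟨?_, ?_, ?_⟩ <;>
      exact mt (hσ _ _ (by decide) (by decide)) (by decide)
  have hlo := hlam o
  have hl3 := hlam 3
  rw [hsum]
  generalize σ o = x, σ 2 = y, σ 3 = z at *
  fin_cases x <;> fin_cases y <;> fin_cases z <;> simp [uEx] at h1 h2 h3 ⊢ <;> linarith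

def TopPaysLess (P : Fin 4 → ℝ) : Prop :=
  P 0 + P 1 ≤ P 2 + P 3 ∧ (P 0 + P 1 = P 2 + P 3 → P 0 = 0 ∧ P 1 = 0)

theorem topPaysLess_of_identity_optimal (lam : Fin 4 → ℝ) (hlam : ∀ i, 0 ≤ lam i)
    (hopt : ∑ i, lam i * uEx i i = OPT 4 (fun i j => lam i * uEx i j)) :
    TopPaysLess (payment 4 (fun i j => lam i * uEx i j) 1) := by
  set u : Fin 4 → Fin 4 → ℝ := fun i j => lam i * uEx i j
  obtain ⟨h32, h12, h02⟩ := lam_bounds_of_identity_optimal lam fun ρ => hopt ▸ sum_le_OPT u ρ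
  have hp0 : payment 4 u 1 0 ≤ 2 * lam 1 := by
    refine (payment_le u 1 0 _ (welfare_without_top_le lam hlam h32 (.inl ⟨rfl, rfl⟩)
      (by linarith [hlam 2]))).trans_eq ?_
    simp only [u, uEx, Perm.one_apply, sum_erase_eq_sub (mem_univ _), Fin.sum_univ_four,
      Matrix.cons_val]
    ring
  have hp1 : payment 4 u 1 1 ≤ 0 := by
    refine (payment_le u 1 1 _ (welfare_without_top_le lam hlam h32 (.inr ⟨rfl, rfl⟩)
      h02)).trans_eq ?_
    simp only [u, uEx, Perm.one_apply, sum_erase_eq_sub (mem_univ _), Fin.sum_univ_four,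
      Matrix.cons_val]
    ring
  have hp2 : 5 * lam 1 ≤ payment 4 u 1 2 := by
    refine le_of_eq_of_le ?_
      (le_payment u 1 2 (swap 1 2) fun k l _ _ h => (swap 1 2).injective h)
    simp only [u, uEx, Perm.one_apply, sum_erase_eq_sub (mem_univ _), Fin.sum_univ_four,
      Matrix.cons_val, swap_apply_left, swap_apply_right, swap_apply_of_ne_of_ne, ne_eq,
      Fin.reduceEq, not_false_eq_true]
    ring
  have hp0_nonneg := payment_nonneg u 1 0
  have hp1_nonneg := payment_nonneg u 1 1
  have hp3_nonneg := payment_nonneg u 1 3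
  have hl1 := hlam 1
  exact ⟨by linarith, fun h => ⟨by linarith, by linarith⟩⟩

def PreservesPairs (π : Perm (Fin 4)) : Prop :=
  (π 0 = 0 ∧ π 1 = 1 ∨ π 0 = 1 ∧ π 1 = 0) ∧ (π 2 = 2 ∧ π 3 = 3 ∨ π 2 = 3 ∧ π 3 = 2)

namespace PreservesPairs

variable {π : Perm (Fin 4)}

theorem uEx_apply (hπ : PreservesPairs π) (k : Fin 4) : uEx (π k) = uEx k := by
  obtain ⟨⟨e0, e1⟩ | ⟨e0, e1⟩, ⟨e2, e3⟩ | ⟨e2, e3⟩⟩ := hπ <;>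
    fin_cases k <;> simp [e0, e1, e2, e3, uEx_one, uEx_three]

theorem trans_self (hπ : PreservesPairs π) : π.trans π = 1 := by
  ext k
  obtain ⟨⟨e0, e1⟩ | ⟨e0, e1⟩, ⟨e2, e3⟩ | ⟨e2, e3⟩⟩ := hπ <;>
    fin_cases k <;> simp [e0, e1, e2, e3]

theorem topPaysLess_of_comp (hπ : PreservesPairs π) {P : Fin 4 → ℝ}
    (h : TopPaysLess (P ∘ π)) : TopPaysLess P := by
  obtain ⟨hle, heq⟩ := h
  obtain ⟨⟨e0, e1⟩ | ⟨e0, e1⟩, ⟨e2, e3⟩ | ⟨e2, e3⟩⟩ := hπ <;>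
    simp only [Function.comp_apply, e0, e1, e2, e3] at hle heq <;>
    exact ⟨by linarith, fun h => by have := heq (by linarith); tauto⟩

end PreservesPairs

/-- In the 4×4 example, for every nonnegative rescaling `λ` and every optimal
assignment `π` (for the rescaled utilities) matching players 1, 2 to items
A, B and players 3, 4 to items C, D, the VCG payments satisfy
`p₁ + p₂ ≤ p₃ + p₄`, with equality only if `p₁ = p₂ = 0`. -/
theorem example_payment_inequality
    (lam : Fin 4 → ℝ) (hlam : ∀ i, 0 ≤ lam i)
    (π : Equiv.Perm (Fin 4))
    (hopt : (∑ i, lam i * uEx i (π i)) = OPT 4 (fun i j => lam i * uEx i j))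
    (h12 : ({π 0, π 1} : Set (Fin 4)) = {0, 1})
    (h34 : ({π 2, π 3} : Set (Fin 4)) = {2, 3}) :
    payment 4 (fun i j => lam i * uEx i j) π 0 +
        payment 4 (fun i j => lam i * uEx i j) π 1 ≤
      payment 4 (fun i j => lam i * uEx i j) π 2 +
        payment 4 (fun i j => lam i * uEx i j) π 3 ∧
    (payment 4 (fun i j => lam i * uEx i j) π 0 +
          payment 4 (fun i j => lam i * uEx i j) π 1 =
        payment 4 (fun i j => lam i * uEx i j) π 2 +
          payment 4 (fun i j => lam i * uEx i j) π 3 →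
      payment 4 (fun i j => lam i * uEx i j) π 0 = 0 ∧
        payment 4 (fun i j => lam i * uEx i j) π 1 = 0) := by
  set u : Fin 4 → Fin 4 → ℝ := fun i j => lam i * uEx i j
  have hπ : PreservesPairs π := ⟨Set.pair_eq_pair_iff.1 h12, Set.pair_eq_pair_iff.1 h34⟩
  have hu : (fun k => u (π k)) = fun i j => lam (π i) * uEx i j := by
    simp only [u, hπ.uEx_apply]
  have hopt' : ∑ i, lam (π i) * uEx i i = OPT 4 (fun i j => lam (π i) * uEx i j) := by
    rw [← hu, OPT_comp, ← hopt, ← Equiv.sum_comp π]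
    simp only [hπ.uEx_apply, ← trans_apply, hπ.trans_self, Perm.one_apply]
  have hP : payment 4 (fun i j => lam (π i) * uEx i j) 1 = payment 4 u π ∘ π := by
    funext i
    rw [← hu, ← hπ.trans_self, payment_comp, Function.comp_apply]
  exact hπ.topPaysLess_of_comp
    (hP ▸ topPaysLess_of_identity_optimal (fun i => lam (π i)) (fun i => hlam _) hopt')
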